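/- For every μ > 0 and every real a with a ≥ μ, the mean deviation of SSLUD(μ) about a satisfies ∫_{ℝ} |x - a| · g(x) dx = (1 + 2/μ) e^{-μ} + 2 e^{-a} + (a - 2/μ). -/

import Mathlib

/-!
On `[-μ, a]` the integrand is `(a - x) g(x)`, and on `(a, ∞)` it is `(x - a) e^{-x}`, whose
integral is `e^{-a}`. Folding `[-μ, μ]` onto `[0, μ]` by `x ↦ -x` turns
`(a - x) g(x) + (a + x) g(-x)` into `(a - x²/μ) e^{-x}`, so everything reduces to integrals of
quadratic polynomials `p` against `e^{-x}`, with antiderivative `-(p + p' + p'') e^{-x}`.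
-/

open MeasureTheory Real

noncomputable def g (μ : ℝ) (x : ℝ) : ℝ :=
  if x < -μ then 0
  else if x < μ then Real.exp (-|x|) * (x / (2 * μ) + 1 / 2)
  else Real.exp (-x)

open Set Filter Topology

section SSLUD

variable {μ x : ℝ}

theorem g_of_le_neg (hμ : 0 < μ) (hx : x ≤ -μ) : g μ x = 0 := by
  rcases hx.lt_or_eq with hlt | rfl
  · simp [g, hlt]
  · simp only [g, lt_irrefl, if_false, neg_lt_self_iff, hμ, if_true]
    field_simp
    ring

theorem g_of_abs_le (hμ : 0 < μ) (hx : |x| ≤ μ) :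
    g μ x = exp (-|x|) * (x / (2 * μ) + 1 / 2) := by
  obtain ⟨hlo, hhi⟩ := abs_le.1 hx
  rcases hhi.lt_or_eq with hlt | rfl
  · simp [g, hlo.not_gt, hlt]
  · simp [g, abs_of_pos hμ, hμ.le.not_gt, field]
    norm_num

theorem g_of_le (hμ : 0 ≤ μ) (hx : μ ≤ x) : g μ x = exp (-x) := by
  simp [g, (show -μ ≤ x by linarith).not_gt, hx.not_gt]

/-- The skew-symmetric form `2 f(x) G(x)`: the Laplace density `f = e^{-|x|}/2` times the
distribution function `G` of the uniform law on `[-μ, μ]`. -/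
theorem g_eq_exp_neg_abs_mul_clamp (hμ : 0 < μ) (x : ℝ) :
    g μ x = exp (-|x|) * max 0 (min 1 (x / (2 * μ) + 1 / 2)) := by
  have key : x / (2 * μ) + 1 / 2 = (x + μ) / (2 * μ) := by field_simp
  rcases le_or_gt x (-μ) with hle | hgt
  · have : (x + μ) / (2 * μ) ≤ 0 := div_nonpos_of_nonpos_of_nonneg (by linarith) (by positivity)
    rw [g_of_le_neg hμ hle, key, min_eq_right (by linarith), max_eq_left this, mul_zero]
  rcases le_or_gt x μ with hle | hgt'
  · have h0 : 0 ≤ (x + μ) / (2 * μ) := div_nonneg (by linarith) (by positivity)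
    have h1 : (x + μ) / (2 * μ) ≤ 1 := (div_le_one (by positivity)).2 (by linarith)
    rw [g_of_abs_le hμ (abs_le.2 ⟨hgt.le, hle⟩), key, min_eq_right h1, max_eq_right h0]
  · have h1 : 1 ≤ (x + μ) / (2 * μ) := (one_le_div (by positivity)).2 (by linarith)
    rw [g_of_le hμ.le hgt'.le, key, min_eq_left h1, max_eq_right zero_le_one, mul_one,
      abs_of_pos (hμ.trans hgt')]

theorem continuous_g (hμ : 0 < μ) : Continuous (g μ) := by
  simp_rw [funext (g_eq_exp_neg_abs_mul_clamp hμ)]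
  fun_prop

open intervalIntegral in
theorem integral_mul_g_eq_integral_fold {φ : ℝ → ℝ} (hφ : Continuous φ) (hμ : 0 < μ) :
    ∫ x in -μ..μ, φ x * g μ x =
      ∫ x in 0..μ, (φ (-x) * (1 / 2 - x / (2 * μ)) + φ x * (1 / 2 + x / (2 * μ))) * exp (-x) := by
  have hcont : Continuous fun x => φ x * g μ x := hφ.mul (continuous_g hμ)
  have hcont_neg : Continuous fun x => φ (-x) * g μ (-x) := hcont.comp continuous_neg
  have hleft : ∫ x in -μ..0, φ x * g μ x = ∫ x in 0..μ, φ (-x) * g μ (-x) := by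
    rw [integral_comp_neg (fun x => φ x * g μ x), neg_zero]
  rw [← integral_add_adjacent_intervals (hcont.intervalIntegrable _ _)
    (hcont.intervalIntegrable _ _), hleft, ← integral_add
    (hcont_neg.intervalIntegrable _ _) (hcont.intervalIntegrable _ _)]
  refine integral_congr fun x hx => ?_
  rw [uIcc_of_le hμ.le] at hx
  have habs : |x| ≤ μ := abs_le.2 ⟨by linarith [hx.1], hx.2⟩
  rw [g_of_abs_le hμ habs, g_of_abs_le hμ (by rwa [abs_neg]), abs_neg, abs_of_nonneg hx.1]
  ring

end SSLUD

theorem hasDerivAt_quadratic_mul_exp_neg (c₀ c₁ c₂ x : ℝ) :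
    HasDerivAt (fun t => -(c₀ + c₁ + 2 * c₂ + (c₁ + 2 * c₂) * t + c₂ * t ^ 2) * exp (-t))
      ((c₀ + c₁ * x + c₂ * x ^ 2) * exp (-x)) x := by
  refine ((((((hasDerivAt_id' x).const_mul (c₁ + 2 * c₂)).const_add (c₀ + c₁ + 2 * c₂)).add
    ((hasDerivAt_pow 2 x).const_mul c₂)).neg.mul (hasDerivAt_neg x).exp)).congr_deriv ?_
  norm_num
  ring

theorem integral_quadratic_mul_exp_neg (c₀ c₁ c₂ s t : ℝ) :
    ∫ x in s..t, (c₀ + c₁ * x + c₂ * x ^ 2) * exp (-x) =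
      (c₀ + c₁ + 2 * c₂ + (c₁ + 2 * c₂) * s + c₂ * s ^ 2) * exp (-s)
        - (c₀ + c₁ + 2 * c₂ + (c₁ + 2 * c₂) * t + c₂ * t ^ 2) * exp (-t) := by
  rw [intervalIntegral.integral_eq_sub_of_hasDerivAt
    (fun x _ => hasDerivAt_quadratic_mul_exp_neg c₀ c₁ c₂ x)
    ((by fun_prop : Continuous _).intervalIntegrable _ _)]
  ring

theorem hasDerivAt_neg_sub_add_one_mul_exp_neg (a x : ℝ) :
    HasDerivAt (fun t => -(t - a + 1) * exp (-t)) ((x - a) * exp (-x)) x := by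
  convert hasDerivAt_quadratic_mul_exp_neg (-a) 1 0 x using 1
  · ext t
    ring
  · ring

theorem tendsto_neg_sub_add_one_mul_exp_neg_atTop (a : ℝ) :
    Tendsto (fun t => -(t - a + 1) * exp (-t)) atTop (𝓝 0) := by
  have h := ((tendsto_pow_mul_exp_neg_atTop_nhds_zero 1).add
    (tendsto_exp_neg_atTop_nhds_zero.const_mul (1 - a))).neg
  simp only [pow_one, mul_zero, add_zero, neg_zero] at h
  refine h.congr fun t => ?_
  ring

theorem sub_mul_exp_neg_nonneg {a x : ℝ} (hx : a ≤ x) : 0 ≤ (x - a) * exp (-x) :=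
  mul_nonneg (sub_nonneg.2 hx) (exp_pos _).le

theorem integrableOn_Ioi_sub_mul_exp_neg (a : ℝ) :
    IntegrableOn (fun x => (x - a) * exp (-x)) (Ioi a) :=
  integrableOn_Ioi_deriv_of_nonneg' (fun x _ => hasDerivAt_neg_sub_add_one_mul_exp_neg a x)
    (fun _ hx => sub_mul_exp_neg_nonneg (le_of_lt hx)) (tendsto_neg_sub_add_one_mul_exp_neg_atTop a)

theorem integral_Ioi_sub_mul_exp_neg (a : ℝ) :
    ∫ x in Ioi a, (x - a) * exp (-x) = exp (-a) := by
  rw [integral_Ioi_of_hasDerivAt_of_nonneg'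
    (fun x _ => hasDerivAt_neg_sub_add_one_mul_exp_neg a x)
    (fun _ hx => sub_mul_exp_neg_nonneg (le_of_lt hx))
    (tendsto_neg_sub_add_one_mul_exp_neg_atTop a)]
  ring

open intervalIntegral in
theorem sslud_mean_deviation_tail (μ : ℝ) (hμ : 0 < μ) (a : ℝ) (h : μ ≤ a) :
    (∫ x : ℝ, |x - a| * g μ x) =
      (1 + 2 / μ) * Real.exp (-μ) + 2 * Real.exp (-a) + (a - 2 / μ) := by
  have hg := continuous_g hμ
  have htail : ∀ x ∈ Ioi a, |x - a| * g μ x = (x - a) * exp (-x) := fun x hx => by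
    rw [abs_of_pos (sub_pos.2 hx), g_of_le hμ.le (h.trans (le_of_lt hx))]
  have hbody : ∀ x ∈ uIcc (-μ) a, |x - a| * g μ x = (a - x) * g μ x := fun x hx => by
    rw [uIcc_of_le (by linarith)] at hx
    rw [abs_of_nonpos (sub_nonpos.2 hx.2), neg_sub]
  have hmid : ∀ x ∈ uIcc μ a, (a - x) * g μ x = (a + -1 * x + 0 * x ^ 2) * exp (-x) :=
    fun x hx => by
      rw [uIcc_of_le h] at hx
      rw [g_of_le hμ.le hx.1]
      ring
  have hint : ∀ s t, IntervalIntegrable (fun x => (a - x) * g μ x) volume s t :=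
    fun s t => (by fun_prop : Continuous _).intervalIntegrable s t
  calc ∫ x, |x - a| * g μ x = ∫ x in Ioi (-μ), |x - a| * g μ x :=
        (setIntegral_eq_integral_of_forall_compl_eq_zero fun x hx => by
          rw [g_of_le_neg hμ (not_lt.1 hx), mul_zero]).symm
    _ = (∫ x in -μ..a, |x - a| * g μ x) + ∫ x in Ioi a, |x - a| * g μ x :=
        (integral_interval_add_Ioi' ((by fun_prop : Continuous _).intervalIntegrable _ _)
          ((integrableOn_Ioi_sub_mul_exp_neg a).congr_fun (fun x hx => (htail x hx).symm)
            measurableSet_Ioi)).symm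
    _ = (∫ x in -μ..μ, (a - x) * g μ x) + (∫ x in μ..a, (a + -1 * x + 0 * x ^ 2) * exp (-x))
          + exp (-a) := by
        rw [setIntegral_congr_fun measurableSet_Ioi htail, integral_Ioi_sub_mul_exp_neg,
          integral_congr hbody, ← integral_congr hmid,
          integral_add_adjacent_intervals (hint _ _) (hint _ _)]
    _ = (∫ x in 0..μ, (a + 0 * x + -1 / μ * x ^ 2) * exp (-x))
          + (∫ x in μ..a, (a + -1 * x + 0 * x ^ 2) * exp (-x)) + exp (-a) := by
        rw [integral_mul_g_eq_integral_fold (by fun_prop) hμ]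
        congr 2
        refine integral_congr fun x _ => ?_
        field_simp
        ring
    _ = (1 + 2 / μ) * Real.exp (-μ) + 2 * Real.exp (-a) + (a - 2 / μ) := by
        rw [integral_quadratic_mul_exp_neg, integral_quadratic_mul_exp_neg, neg_zero, exp_zero]
        field_simp
        ring
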